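/- arXiv:2004.02917 — 3 statements merged into one kernel-verified Lean document; each statement's English description precedes it below -/
import Mathlib

section
/- For every u ∈ H¹(S¹, ℝ) and every δ ∈ ℝ, the integral over S¹ of u'(x)·(−Δ)^{1/2}u(x)·sin(x−δ) dx equals 0. -/
/-!
By Parseval on `[0, 2π]`, `∫ u' · (−Δ)^{1/2}u · e^{ix}` is `2π ∑ₖ conj (û'(k)) · ((−Δ)^{1/2}u)^(k − 1)`,
whose `k`-th term is `−i k |k − 1| û(−k) û(k − 1)`. The substitution `k ↦ 1 − k` changes the sign
of every term, since `(k − 1) |k| = k |k − 1|` on `ℤ`, so the sum vanishes; the integral against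
`sin (x − δ)` is the imaginary part of `e^{−iδ}` times it.
-/

open MeasureTheory Set

/-- The `k`-th Fourier coefficient `(1/2π) ∫₀^{2π} u(x) e^{-ikx} dx` of a
`2π`-periodic function `u : ℝ → ℝ`. -/
noncomputable def fourierCoeffP (u : ℝ → ℝ) (k : ℤ) : ℂ :=
  (1 / (2 * Real.pi)) *
    ∫ x in (0:ℝ)..(2 * Real.pi), (u x : ℂ) * Complex.exp (-(Complex.I) * (k : ℂ) * (x : ℂ))

open Complex Function ComplexConjugate

lemma tsum_eq_zero_of_involutive_of_neg {α β : Type*} [AddCommGroup β] [IsAddTorsionFree β]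
    [TopologicalSpace β] [IsTopologicalAddGroup β] [T2Space β] {f : α → β} {σ : α → α}
    (hσ : Involutive σ) (hf : ∀ a, f (σ a) = -f a) : ∑' a, f a = 0 := by
  have h := (hσ.toPerm σ).tsum_eq f
  simp only [Involutive.coe_toPerm, hf, tsum_neg] at h
  exact neg_eq_self.mp h

lemma Int.sub_one_mul_abs (n : ℤ) : (n - 1) * |n| = n * |n - 1| := by
  rcases le_or_gt 1 n with h | h
  · rw [abs_of_nonneg (by omega), abs_of_nonneg (by omega)]; ring
  · rw [abs_of_nonpos (by omega), abs_of_nonpos (by omega)]; ring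

theorem AddCircle.hasSum_conj_mul_fourierCoeff {T : ℝ} [hT : Fact (0 < T)]
    (f g : Lp ℂ 2 (@haarAddCircle T hT)) :
    HasSum (fun i => conj (fourierCoeff f i) * fourierCoeff g i)
      (∫ t, conj (f t) * g t ∂haarAddCircle) := by
  simp_rw [mul_comm (conj _)]
  refine HasSum.congr_fun (fourierBasis.hasSum_inner_mul_inner f g) (fun n ↦ ?_)
  simp only [← fourierBasis_repr, HilbertBasis.repr_apply_apply, inner_conj_symm,
    mul_comm (inner ℂ f _)]

theorem hasSum_conj_mul_fourierCoeffOn {a b : ℝ} {f g : ℝ → ℂ} (hab : a < b)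
    (hf : MemLp f 2 (volume.restrict (Ioc a b))) (hg : MemLp g 2 (volume.restrict (Ioc a b))) :
    HasSum (fun i => conj (fourierCoeffOn hab f i) * fourierCoeffOn hab g i)
      ((b - a)⁻¹ • ∫ x in a..b, conj (f x) * g x) := by
  have := Fact.mk (by linarith : 0 < b - a)
  rw [← add_sub_cancel a b] at hf hg
  have hf' := hf.memLp_liftIoc.haarAddCircle
  have hg' := hg.memLp_liftIoc.haarAddCircle
  convert AddCircle.hasSum_conj_mul_fourierCoeff hf'.toLp hg'.toLp using 1
  · simp [fourierCoeff_congr_ae hf'.coeFn_toLp, fourierCoeff_congr_ae hg'.coeFn_toLp,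
      fourierCoeff_liftIoc_eq]
  · nth_rw 2 [← add_sub_cancel a b]
    rw [← AddCircle.integral_liftIoc_eq_intervalIntegral, ← AddCircle.integral_haarAddCircle]
    refine integral_congr_ae ?_
    filter_upwards [hf'.coeFn_toLp, hg'.coeFn_toLp] with x hfx hgx
    rw [hfx, hgx]
    rfl

lemma fourierCoeffOn_fourier_mul {a b : ℝ} (hab : a < b) (f : ℝ → ℂ) (m n : ℤ) :
    fourierCoeffOn hab (fun x => fourier m (x : AddCircle (b - a)) * f x) n =
      fourierCoeffOn hab f (n - m) := by
  simp only [fourierCoeffOn_eq_integral, smul_eq_mul, ← mul_assoc, ← fourier_add]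
  ring_nf

lemma conj_fourierCoeffOn_ofReal {a b : ℝ} (hab : a < b) (f : ℝ → ℝ) (n : ℤ) :
    conj (fourierCoeffOn hab (fun x => (f x : ℂ)) n) =
      fourierCoeffOn hab (fun x => (f x : ℂ)) (-n) := by
  simp only [fourierCoeffOn_eq_integral, Complex.real_smul, map_mul, conj_ofReal,
    ← intervalIntegral.intervalIntegral_conj, smul_eq_mul, fourier_neg, conj_conj, neg_neg]

lemma MeasureTheory.MemLp.fourier_mul {T : ℝ} {μ : Measure ℝ} {f : ℝ → ℂ} {p : ENNReal}
    (hf : MemLp f p μ) (m : ℤ) : MemLp (fun x : ℝ => fourier m (x : AddCircle T) * f x) p μ := by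
  have hcont : Continuous fun x : ℝ => fourier m (x : AddCircle T) :=
    (map_continuous (fourier m)).comp (AddCircle.continuous_mk' T)
  refine hf.of_le (hcont.aestronglyMeasurable.mul hf.1) (ae_of_all _ fun x => ?_)
  rw [norm_mul, fourier_apply, Circle.norm_coe, one_mul]

lemma intervalIntegral_mul_sin_sub_eq_zero {f : ℝ → ℝ} {a b : ℝ}
    (hf : IntervalIntegrable f volume a b) (h : ∫ x in a..b, (f x : ℂ) * exp (x * I) = 0)
    (δ : ℝ) : ∫ x in a..b, f x * Real.sin (x - δ) = 0 := by
  have hfc : IntervalIntegrable (fun x => exp (-δ * I) * ((f x : ℂ) * exp (x * I))) volume a b :=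
    (IntervalIntegrable.mul_continuousOn ⟨hf.1.ofReal, hf.2.ofReal⟩
      (by fun_prop : Continuous fun x : ℝ => exp (x * I)).continuousOn).const_mul _
  calc ∫ x in a..b, f x * Real.sin (x - δ)
      = ∫ x in a..b, RCLike.im (exp (-δ * I) * ((f x : ℂ) * exp (x * I))) := by
        refine intervalIntegral.integral_congr fun x _ => ?_
        have : exp (-δ * I) * ((f x : ℂ) * exp (x * I)) = f x * exp ((x - δ : ℝ) * I) := by
          rw [mul_left_comm, ← Complex.exp_add]; push_cast; ring_nf
        rw [RCLike.im_to_complex, this, Complex.im_ofReal_mul, Complex.exp_ofReal_mul_I_im]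
    _ = RCLike.im (exp (-δ * I) * ∫ x in a..b, (f x : ℂ) * exp (x * I)) := by
        rw [intervalIntegral.intervalIntegral_im hfc, intervalIntegral.integral_const_mul]
    _ = 0 := by rw [h, mul_zero, map_zero]

lemma fourierCoeffP_eq_fourierCoeffOn (f : ℝ → ℝ) (k : ℤ) :
    fourierCoeffP f k = fourierCoeffOn Real.two_pi_pos (fun x => (f x : ℂ)) k := by
  rw [fourierCoeffOn_eq_integral, fourierCoeffP]
  simp only [fourier_coe_apply, sub_zero, smul_eq_mul, Complex.real_smul]
  congr 1
  · push_cast; ring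
  · refine intervalIntegral.integral_congr fun x _ => ?_
    rw [mul_comm]
    congr 2
    field_simp
    push_cast
    ring

lemma fourier_one_coe_two_pi (x : ℝ) :
    fourier 1 (x : AddCircle (2 * Real.pi - 0)) = exp (x * I) := by
  rw [fourier_coe_apply, sub_zero]
  congr 1
  field_simp
  push_cast
  ring

lemma conj_deriv_mul_halfLap_antisymm {c d h : ℤ → ℂ} (hc : ∀ k, conj (c k) = c (-k))
    (hd : ∀ k, d k = I * k * c k) (hh : ∀ k : ℤ, h k = (k.natAbs : ℂ) * c k) (n : ℤ) :
    conj (d (1 - n)) * h (-n) = -(conj (d n) * h (n - 1)) := by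
  have habs : ((n - 1 : ℤ) : ℂ) * (n.natAbs : ℂ) = n * ((n - 1).natAbs : ℂ) := by
    simp only [Nat.cast_natAbs]
    exact_mod_cast Int.sub_one_mul_abs n
  simp only [hd, hh, map_mul, conj_I, map_intCast, hc, neg_sub, Int.natAbs_neg]
  push_cast at habs ⊢
  linear_combination I * c (n - 1) * c (-n) * habs

theorem integral_deriv_halfLap_sin_zero_general (u du hu : ℝ → ℝ) (δ : ℝ)
    (hmdu : Measurable du) (hmhu : Measurable hu)
    (hdu2 : IntegrableOn (fun x => (du x) ^ 2) (Set.Ioc 0 (2 * Real.pi)))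
    (hhu2 : IntegrableOn (fun x => (hu x) ^ 2) (Set.Ioc 0 (2 * Real.pi)))
    (hcdu : ∀ k : ℤ, fourierCoeffP du k = Complex.I * (k : ℂ) * fourierCoeffP u k)
    (hchu : ∀ k : ℤ, fourierCoeffP hu k = (k.natAbs : ℂ) * fourierCoeffP u k) :
    ∫ x in (0:ℝ)..(2 * Real.pi), du x * hu x * Real.sin (x - δ) = 0 := by
  simp only [fourierCoeffP_eq_fourierCoeffOn] at hcdu hchu
  have hdu := (memLp_two_iff_integrable_sq hmdu.aestronglyMeasurable).2 hdu2
  have hhu := (memLp_two_iff_integrable_sq hmhu.aestronglyMeasurable).2 hhu2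
  have hduC : MemLp (fun x => (du x : ℂ)) 2 _ := hdu.ofReal
  have hhuC : MemLp (fun x => (hu x : ℂ)) 2 _ := hhu.ofReal
  have hparseval := hasSum_conj_mul_fourierCoeffOn Real.two_pi_pos hduC
    (hhuC.fourier_mul (T := 2 * Real.pi - 0) 1)
  have hsum : ∑' n, conj (fourierCoeffOn Real.two_pi_pos (fun x => (du x : ℂ)) n) *
      fourierCoeffOn Real.two_pi_pos
        (fun x : ℝ => fourier 1 (x : AddCircle (2 * Real.pi - 0)) * (hu x : ℂ)) n = 0 := by
    refine tsum_eq_zero_of_involutive_of_neg (σ := fun n => 1 - n) (fun n => sub_sub_cancel 1 n)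
      fun n => ?_
    simp only [fourierCoeffOn_fourier_mul, sub_sub_cancel_left]
    exact conj_deriv_mul_halfLap_antisymm (conj_fourierCoeffOn_ofReal _ u) hcdu hchu n
  rw [hparseval.tsum_eq, smul_eq_zero_iff_right (by simp [Real.pi_ne_zero])] at hsum
  have hprod : IntervalIntegrable (fun x => du x * hu x) volume 0 (2 * Real.pi) :=
    (intervalIntegrable_iff_integrableOn_Ioc_of_le Real.two_pi_pos.le).2 (hdu.integrable_mul hhu)
  refine intervalIntegral_mul_sin_sub_eq_zero hprod ?_ δ
  rw [← hsum]
  refine intervalIntegral.integral_congr fun x _ => ?_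
  simp only [conj_ofReal, fourier_one_coe_two_pi]
  push_cast
  ring

/-- For `u ∈ H¹(S¹, ℝ)` and every `δ ∈ ℝ`,
`∫_{S¹} u'(x)·(−Δ)^{1/2}u(x)·sin(x−δ) dx = 0`.  Here `du = u'` and `hu = (−Δ)^{1/2}u`
are encoded by their Fourier coefficients `ik û(k)` and `|k| û(k)`. -/
theorem integral_deriv_halfLap_sin_zero (u du hu : ℝ → ℝ) (δ : ℝ)
    (hu_per : Function.Periodic u (2 * Real.pi))
    (hdu_per : Function.Periodic du (2 * Real.pi))
    (hhu_per : Function.Periodic hu (2 * Real.pi))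
    (hmu : Measurable u) (hmdu : Measurable du) (hmhu : Measurable hu)
    (hu2 : IntegrableOn (fun x => (u x) ^ 2) (Set.Ioc 0 (2 * Real.pi)))
    (hdu2 : IntegrableOn (fun x => (du x) ^ 2) (Set.Ioc 0 (2 * Real.pi)))
    (hhu2 : IntegrableOn (fun x => (hu x) ^ 2) (Set.Ioc 0 (2 * Real.pi)))
    (hH1 : Summable fun k : ℤ => (1 + (k : ℝ) ^ 2) * ‖fourierCoeffP u k‖ ^ 2)
    (hcdu : ∀ k : ℤ, fourierCoeffP du k = Complex.I * (k : ℂ) * fourierCoeffP u k)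
    (hchu : ∀ k : ℤ, fourierCoeffP hu k = (k.natAbs : ℂ) * fourierCoeffP u k) :
    ∫ x in (0:ℝ)..(2 * Real.pi), du x * hu x * Real.sin (x - δ) = 0 :=
  integral_deriv_halfLap_sin_zero_general u du hu δ hmdu hmhu hdu2 hhu2 hcdu hchu
end

section
/- Characterization of half-wave stationary points by Fourier coefficients of the harmonic extension: let u ∈ H^{1/2}(S¹, ℝ^m) with Fourier coefficients û(k) ∈ ℂ^m, and let ũ(r,θ) = Σ_k r^{|k|} û(k) e^{ikθ} be its harmonic extension to the unit disc. Then the following are equivalent: (i) for every k ∈ ℕ_{>0}, Σ_{a+b=k, a,b≥1} a û(a) ·_{ℂ^m} b û(b) = 0; (ii) ∂_θ ũ · ∂_r ũ = 0 everywhere in the open unit disc. -/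
/-!
Fix `0 < r < 1`, put `z = r e^{iθ}` and `v_j = Σ_{n ≥ 1} n c(n)_j z^n`. Since `c(-k) = conj (c k)`,
the two series in (ii) are `i (v_j - conj v_j)` and `r⁻¹ (v_j + conj v_j)`, so their pairing is
`-2 r⁻¹ Im Σ_j v_j²`; by the Cauchy product, `Σ_j v_j² = F z` for the power series
`F z = Σ_n D_n z^n` whose coefficients `D_n` are the sums in (i). Thus (i) gives (ii) at once.
Conversely, (ii) makes `F` real on the circle `|z| = 1/2`; integrating `F = conj F` against
`e^{-iNθ}` picks out `2π D_N / 2^N` on the left and nothing on the right when `N ≥ 1`, because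
`conj F` has only non-positive frequencies.
-/

open Complex ComplexConjugate Finset
open scoped Real

namespace HalfWave

theorem sum_Ioo_int_eq_sum_antidiagonal {M : Type*} [AddCommMonoid M] (g : ℤ → ℤ → M)
    (hg : ∀ b, g 0 b = 0) (hg' : ∀ a, g a 0 = 0) (n : ℕ) :
    ∑ a ∈ Ioo (0 : ℤ) n, g a (n - a) = ∑ p ∈ antidiagonal n, g p.1 p.2 := by
  refine sum_bij_ne_zero (fun a _ _ => (a.toNat, n - a.toNat)) ?_ ?_ ?_ ?_
  · intro a ha _
    simp only [mem_Ioo] at ha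
    simp only [HasAntidiagonal.mem_antidiagonal]
    omega
  · intro a ha _ b hb _ h
    simp only [mem_Ioo, Prod.mk.injEq] at ha hb h
    omega
  · rintro ⟨a, b⟩ hab hg0
    simp only [HasAntidiagonal.mem_antidiagonal] at hab
    have ha : a ≠ 0 := by rintro rfl; exact hg0 (hg _)
    have hb : b ≠ 0 := by rintro rfl; exact hg0 (hg' _)
    refine ⟨a, by simp only [mem_Ioo]; omega, ?_, by simp only [Prod.mk.injEq]; omega⟩
    convert hg0 using 2
    omega
  · intro a ha _
    simp only [mem_Ioo] at ha
    congr <;> omega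

theorem hasSum_int_of_neg_eq_conj {f : ℤ → ℂ} (hf : ∀ k, f (-k) = conj (f k)) (h0 : f 0 = 0)
    {s : ℂ} (hs : HasSum (fun n : ℕ => f n) s) : HasSum f (s + conj s) := by
  refine hs.of_nat_of_neg_add_one ?_
  have hs' : HasSum (fun n : ℕ => f (n + 1 : ℕ)) s := by
    simpa [h0] using (hasSum_nat_add_iff' 1).mpr hs
  convert Complex.hasSum_conj'.mpr hs' using 2 with n
  rw [← hf]
  push_cast
  rfl

theorem summable_norm_natCast_mul_mul_pow {a : ℕ → ℂ} {M : ℝ} (ha : ∀ n, ‖a n‖ ≤ M) {z : ℂ}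
    (hz : ‖z‖ < 1) : Summable fun n : ℕ => ‖(n : ℂ) * a n * z ^ n‖ := by
  refine .of_nonneg_of_le (fun _ => norm_nonneg _) (fun n => ?_)
    ((summable_pow_mul_geometric_of_norm_lt_one 1 (r := ‖z‖) (by rwa [norm_norm])).mul_left M)
  calc ‖(n : ℂ) * a n * z ^ n‖ = ‖a n‖ * ((n : ℝ) ^ 1 * ‖z‖ ^ n) := by
        rw [norm_mul, norm_mul, norm_pow, Complex.norm_natCast]; ring
    _ ≤ M * ((n : ℝ) ^ 1 * ‖z‖ ^ n) := by gcongr; exact ha n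

theorem hasSum_sq_tsum_natCast_mul_mul_pow {a : ℕ → ℂ} {M : ℝ} (ha : ∀ n, ‖a n‖ ≤ M) {z : ℂ}
    (hz : ‖z‖ < 1) :
    HasSum (fun n : ℕ => ∑ p ∈ antidiagonal n,
        (p.1 : ℂ) * a p.1 * z ^ p.1 * ((p.2 : ℂ) * a p.2 * z ^ p.2))
      ((∑' n : ℕ, n * a n * z ^ n) ^ 2) := by
  have ht := summable_norm_natCast_mul_mul_pow ha hz
  rw [sq, tsum_mul_tsum_eq_tsum_sum_antidiagonal_of_summable_norm ht ht]
  exact (summable_norm_sum_mul_antidiagonal_of_summable_norm ht ht).of_norm.hasSum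

theorem integral_exp_I_mul_intCast_mul (k : ℤ) :
    ∫ θ in (0 : ℝ)..2 * π, exp (I * k * θ) = if k = 0 then 2 * (π : ℂ) else 0 := by
  split_ifs with hk
  · simp [hk]
  · have hc : I * k ≠ 0 := mul_ne_zero I_ne_zero (Int.cast_ne_zero.mpr hk)
    rw [integral_exp_mul_complex hc, div_eq_zero_iff, sub_eq_zero]
    left
    push_cast
    rw [mul_zero, exp_zero, ← exp_int_mul_two_pi_mul_I k]
    ring_nf

theorem hasSum_integral_tsum_mul_exp {d : ℕ → ℂ} (hd : Summable (‖d ·‖)) (k : ℤ) :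
    HasSum (fun n : ℕ => if (n : ℤ) + k = 0 then 2 * π * d n else 0)
      (∫ θ in (0 : ℝ)..2 * π, (∑' n : ℕ, d n * exp (I * n * θ)) * exp (I * k * θ)) := by
  have hterm (n : ℕ) : ∫ θ in (0 : ℝ)..2 * π, d n * exp (I * n * θ) * exp (I * k * θ) =
      if (n : ℤ) + k = 0 then 2 * π * d n else 0 := by
    have h (θ : ℝ) : d n * exp (I * n * θ) * exp (I * k * θ) =
        d n * exp (I * ((n + k : ℤ) : ℂ) * θ) := by
      rw [mul_assoc, ← exp_add]
      push_cast
      ring_nf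
    simp_rw [h, intervalIntegral.integral_const_mul, integral_exp_I_mul_intCast_mul]
    split_ifs <;> ring
  have hnorm (n : ℕ) (θ : ℝ) : ‖d n * exp (I * n * θ)‖ = ‖d n‖ := by simp [norm_exp]
  have hs (θ : ℝ) : Summable fun n : ℕ => d n * exp (I * n * θ) :=
    hd.of_norm_bounded fun n => (hnorm n θ).le
  simp_rw [← hterm]
  refine intervalIntegral.hasSum_integral_of_dominated_convergence (fun n _ => ‖d n‖)
    (fun n => (by fun_prop : Continuous _).aestronglyMeasurable)
    (fun n => MeasureTheory.ae_of_all _ fun θ _ => ?_)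
    (MeasureTheory.ae_of_all _ fun _ _ => hd) intervalIntegrable_const
    (MeasureTheory.ae_of_all _ fun θ _ => (hs θ).hasSum.mul_right _)
  simp [norm_exp]

theorem eq_zero_of_forall_im_tsum_eq_zero {d : ℕ → ℂ} (hd : Summable (‖d ·‖))
    (him : ∀ θ : ℝ, (∑' n : ℕ, d n * exp (I * n * θ)).im = 0) {N : ℕ} (hN : N ≠ 0) :
    d N = 0 := by
  have hcoeff := (hasSum_integral_tsum_mul_exp hd (-N)).unique <| by
    convert hasSum_ite_eq N (2 * π * d N) using 2 with n
    simp only [add_neg_eq_zero, Nat.cast_inj]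
    split_ifs <;> simp_all
  have hvanish := (hasSum_integral_tsum_mul_exp hd N).unique <| by
    convert hasSum_zero with n
    rw [if_neg (by omega)]
  have : 2 * π * d N = conj 0 := by
    rw [← hcoeff, ← hvanish, intervalIntegral.integral_of_le Real.two_pi_pos.le,
      intervalIntegral.integral_of_le Real.two_pi_pos.le, ← integral_conj]
    congr 1
    funext θ
    rw [map_mul, conj_eq_iff_im.mpr (him θ), ← exp_conj]
    simp
  simpa [Real.pi_ne_zero] using this

theorem hasSum_angular {a : ℤ → ℂ} (ha : ∀ k, a (-k) = conj (a k)) (r θ : ℝ) {v : ℂ}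
    (hv : HasSum (fun n : ℕ => (n : ℂ) * a n * (r * exp (I * θ)) ^ n) v) :
    HasSum (fun k : ℤ => I * k * (r : ℂ) ^ k.natAbs * a k * exp (I * k * θ))
      (I * (v - conj v)) := by
  have hpos : HasSum (fun n : ℕ => I * ((n : ℤ) : ℂ) * (r : ℂ) ^ (n : ℤ).natAbs * a n *
      exp (I * ((n : ℤ) : ℂ) * θ)) (I * v) := by
    refine (hv.mul_left I).congr_fun fun n => ?_
    rw [mul_pow, ← exp_nat_mul, Int.natAbs_natCast]
    push_cast
    ring_nf
  have hsym (k : ℤ) : I * ((-k : ℤ) : ℂ) * (r : ℂ) ^ (-k).natAbs * a (-k) *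
      exp (I * ((-k : ℤ) : ℂ) * θ) = conj (I * k * (r : ℂ) ^ k.natAbs * a k * exp (I * k * θ)) := by
    simp only [ha, map_mul, conj_I, map_intCast, map_pow, conj_ofReal, ← exp_conj, Int.natAbs_neg,
      Int.cast_neg]
    ring_nf
  have h := hasSum_int_of_neg_eq_conj
    (f := fun k : ℤ => I * k * (r : ℂ) ^ k.natAbs * a k * exp (I * k * θ)) hsym (by simp) hpos
  rwa [map_mul, conj_I, neg_mul, ← sub_eq_add_neg, ← mul_sub] at h

theorem hasSum_radial {a : ℤ → ℂ} (ha : ∀ k, a (-k) = conj (a k)) {r : ℝ} (hr : r ≠ 0) (θ : ℝ)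
    {v : ℂ} (hv : HasSum (fun n : ℕ => (n : ℂ) * a n * (r * exp (I * θ)) ^ n) v) :
    HasSum (fun k : ℤ => k.natAbs * (r : ℂ) ^ ((k.natAbs : ℤ) - 1) * a k * exp (I * k * θ))
      ((r : ℂ)⁻¹ * (v + conj v)) := by
  have hpos : HasSum (fun n : ℕ => ((n : ℤ).natAbs : ℂ) * (r : ℂ) ^ (((n : ℤ).natAbs : ℤ) - 1) *
      a n * exp (I * ((n : ℤ) : ℂ) * θ)) ((r : ℂ)⁻¹ * v) := by
    refine (hv.mul_left (r : ℂ)⁻¹).congr_fun fun n => ?_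
    rw [mul_pow, ← exp_nat_mul, Int.natAbs_natCast, zpow_sub₀ (by exact_mod_cast hr), zpow_one,
      zpow_natCast]
    push_cast
    ring_nf
  have hsym (k : ℤ) : ((-k).natAbs : ℂ) * (r : ℂ) ^ (((-k).natAbs : ℤ) - 1) * a (-k) *
      exp (I * ((-k : ℤ) : ℂ) * θ) =
      conj (k.natAbs * (r : ℂ) ^ ((k.natAbs : ℤ) - 1) * a k * exp (I * k * θ)) := by
    simp only [ha, map_mul, map_natCast, map_zpow₀, conj_ofReal, ← exp_conj, conj_I,
      map_intCast, Int.natAbs_neg, Int.cast_neg]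
    ring_nf
  have h := hasSum_int_of_neg_eq_conj
    (f := fun k : ℤ => k.natAbs * (r : ℂ) ^ ((k.natAbs : ℤ) - 1) * a k * exp (I * k * θ))
    hsym (by simp) hpos
  rwa [map_mul, map_inv₀, conj_ofReal, ← mul_add] at h

variable {ι : Type*} [Fintype ι]

noncomputable def pairingCoeff (c : ℤ → ι → ℂ) (n : ℕ) : ℂ :=
  ∑ p ∈ antidiagonal n, (p.1 * p.2 : ℂ) * ∑ j, c p.1 j * c p.2 j

theorem pairingCoeff_zero (c : ℤ → ι → ℂ) : pairingCoeff c 0 = 0 := by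
  simp [pairingCoeff]

theorem sum_Ioo_eq_pairingCoeff (c : ℤ → ι → ℂ) (n : ℕ) :
    ∑ a ∈ Ioo (0 : ℤ) n, ((a : ℂ) * ((n - a : ℤ) : ℂ) * ∑ j, c a j * c (n - a) j) =
      pairingCoeff c n :=
  (sum_Ioo_int_eq_sum_antidiagonal (fun a b => (a : ℂ) * b * ∑ j, c a j * c b j)
    (by simp) (by simp) n).trans (by simp [pairingCoeff])

theorem forall_sum_Ioo_eq_zero_iff (c : ℤ → ι → ℂ) :
    (∀ k : ℤ, 0 < k →
      ∑ a ∈ Ioo (0 : ℤ) k, ((a : ℂ) * ((k - a : ℤ) : ℂ) * ∑ j, c a j * c (k - a) j) = 0) ↔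
      ∀ n, pairingCoeff c n = 0 := by
  refine ⟨fun h n => ?_, fun h k hk => ?_⟩
  · rcases eq_or_ne n 0 with rfl | hn
    · exact pairingCoeff_zero c
    · rw [← sum_Ioo_eq_pairingCoeff]
      exact h n (by omega)
  · lift k to ℕ using hk.le
    rw [sum_Ioo_eq_pairingCoeff]
    exact h k

theorem exists_norm_le_of_summable (c : ℤ → ι → ℂ)
    (hsum : Summable fun k : ℤ => (k.natAbs : ℝ) * ∑ j, ‖c k j‖ ^ 2) :
    ∃ M, ∀ k j, ‖c k j‖ ≤ M := by
  refine ⟨1 + (∑' k : ℤ, (k.natAbs : ℝ) * ∑ j, ‖c k j‖ ^ 2) + ∑ j, ‖c 0 j‖, fun k j => ?_⟩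
  have hS : 0 ≤ ∑' k : ℤ, (k.natAbs : ℝ) * ∑ j, ‖c k j‖ ^ 2 :=
    tsum_nonneg fun k => by positivity
  have h0 : 0 ≤ ∑ j, ‖c 0 j‖ := by positivity
  rcases eq_or_ne k 0 with rfl | hk
  · have := single_le_sum (fun j _ => norm_nonneg (c 0 j)) (mem_univ j)
    linarith
  · have hk1 : (1 : ℝ) ≤ k.natAbs := by exact_mod_cast Int.natAbs_pos.mpr hk
    have hj : ‖c k j‖ ^ 2 ≤ ∑ j, ‖c k j‖ ^ 2 :=
      single_le_sum (f := fun j => ‖c k j‖ ^ 2) (fun j _ => by positivity) (mem_univ j)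
    have hterm := hsum.le_tsum k fun k _ => by positivity
    nlinarith [sq_nonneg (‖c k j‖ - 1), norm_nonneg (c k j)]

theorem sum_sum_antidiagonal_eq_pairingCoeff_mul_pow (c : ℤ → ι → ℂ) (z : ℂ) (n : ℕ) :
    ∑ j, ∑ p ∈ antidiagonal n, (p.1 : ℂ) * c p.1 j * z ^ p.1 * ((p.2 : ℂ) * c p.2 j * z ^ p.2) =
      pairingCoeff c n * z ^ n := by
  rw [pairingCoeff, sum_comm, sum_mul]
  refine sum_congr rfl fun p hp => ?_
  rw [← HasAntidiagonal.mem_antidiagonal.mp hp, pow_add, mul_sum, sum_mul]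
  exact sum_congr rfl fun j _ => by ring

theorem hasSum_pairingCoeff_mul_pow {c : ℤ → ι → ℂ} {M : ℝ} (hM : ∀ (n : ℕ) j, ‖c n j‖ ≤ M)
    {z : ℂ} (hz : ‖z‖ < 1) :
    HasSum (fun n => pairingCoeff c n * z ^ n) (∑ j, (∑' n : ℕ, n * c n j * z ^ n) ^ 2) := by
  simp_rw [← sum_sum_antidiagonal_eq_pairingCoeff_mul_pow]
  exact hasSum_sum fun j _ => hasSum_sq_tsum_natCast_mul_mul_pow (hM · j) hz

theorem summable_norm_pairingCoeff_mul_pow {c : ℤ → ι → ℂ} {M : ℝ}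
    (hM : ∀ (n : ℕ) j, ‖c n j‖ ≤ M) {z : ℂ} (hz : ‖z‖ < 1) :
    Summable fun n => ‖pairingCoeff c n * z ^ n‖ := by
  have ht j := summable_norm_natCast_mul_mul_pow (hM · j) hz
  refine .of_nonneg_of_le (fun _ => norm_nonneg _) (fun n => ?_)
    (summable_sum (s := univ) fun j _ =>
      summable_norm_sum_mul_antidiagonal_of_summable_norm (ht j) (ht j))
  rw [← sum_sum_antidiagonal_eq_pairingCoeff_mul_pow]
  exact norm_sum_le _ _

theorem sum_tsum_angular_mul_tsum_radial_eq {c : ℤ → ι → ℂ}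
    (hreal : ∀ k j, c (-k) j = conj (c k j)) {M : ℝ} (hM : ∀ (n : ℕ) j, ‖c n j‖ ≤ M) {r : ℝ}
    (hr0 : 0 < r) (hr1 : r < 1) (θ : ℝ) :
    ∑ j, (∑' k : ℤ, I * k * (r : ℂ) ^ k.natAbs * c k j * exp (I * k * θ)) *
        (∑' k : ℤ, (k.natAbs : ℂ) * (r : ℂ) ^ ((k.natAbs : ℤ) - 1) * c k j * exp (I * k * θ)) =
      -2 * (r : ℂ)⁻¹ * ((∑' n, pairingCoeff c n * (r * exp (I * θ)) ^ n).im : ℂ) := by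
  have hz : ‖(r : ℂ) * exp (I * θ)‖ < 1 := by
    rwa [norm_mul, norm_exp_I_mul_ofReal, mul_one, norm_real, Real.norm_of_nonneg hr0.le]
  have hv j := (summable_norm_natCast_mul_mul_pow (hM · j) hz).of_norm.hasSum
  rw [(hasSum_pairingCoeff_mul_pow hM hz).tsum_eq]
  set v := fun j => ∑' n : ℕ, n * c n j * (r * exp (I * θ)) ^ n
  calc _ = ∑ j, I * (v j - conj (v j)) * ((r : ℂ)⁻¹ * (v j + conj (v j))) :=
        sum_congr rfl fun j _ => by
          rw [(hasSum_angular (a := fun k => c k j) (hreal · j) r θ (hv j)).tsum_eq,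
            (hasSum_radial (a := fun k => c k j) (hreal · j) hr0.ne' θ (hv j)).tsum_eq]
    _ = I * (r : ℂ)⁻¹ * (∑ j, v j ^ 2 - conj (∑ j, v j ^ 2)) := by
        rw [map_sum, ← sum_sub_distrib, mul_sum]
        exact sum_congr rfl fun j _ => by rw [map_pow]; ring
    _ = _ := by
        rw [sub_conj]
        push_cast
        linear_combination (2 * (r : ℂ)⁻¹ * ((∑ j, v j ^ 2).im : ℂ)) * I_sq

end HalfWave

open HalfWave in
/-- Characterization of half-wave stationary points by Fourier coefficients of the
harmonic extension: for `u ∈ H^{1/2}(S¹, ℝ^m)` with Fourier coefficients `c k ∈ ℂ^m`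
(reality `c(−k) = conj(c k)`, `Σ |k| |c k|² < ∞`), the following are equivalent:
(i) for every `k > 0`, `Σ_{a+b=k, a,b≥1} a c(a) ·_{ℂ^m} b c(b) = 0`;
(ii) `∂_θ ũ · ∂_r ũ = 0` everywhere in the open unit disc, where
`ũ(r,θ) = Σ_k r^{|k|} c(k) e^{ikθ}` is the harmonic extension. -/
theorem stationary_iff_orthogonal_derivatives (m : ℕ) (c : ℤ → Fin m → ℂ)
    (hreal : ∀ k : ℤ, ∀ j : Fin m, c (-k) j = starRingEnd ℂ (c k j))
    (hsum : Summable fun k : ℤ => (k.natAbs : ℝ) * ∑ j : Fin m, ‖c k j‖ ^ 2) :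
    (∀ k : ℤ, 0 < k →
      ∑ a ∈ Finset.Ioo (0:ℤ) k,
        ((a : ℂ) * ((k - a : ℤ) : ℂ) * ∑ j : Fin m, c a j * c (k - a) j) = 0)
    ↔ (∀ r : ℝ, 0 < r → r < 1 → ∀ θ : ℝ,
        ∑ j : Fin m,
          (∑' k : ℤ, Complex.I * (k : ℂ) * ((r : ℂ)) ^ (k.natAbs) * c k j *
              Complex.exp (Complex.I * (k : ℂ) * (θ : ℂ)))
          * (∑' k : ℤ, ((k.natAbs : ℂ)) * ((r : ℂ)) ^ ((k.natAbs : ℤ) - 1) * c k j *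
              Complex.exp (Complex.I * (k : ℂ) * (θ : ℂ))) = 0) := by
  obtain ⟨M, hM⟩ := exists_norm_le_of_summable c hsum
  have hMnat : ∀ (n : ℕ) j, ‖c n j‖ ≤ M := fun n => hM n
  rw [forall_sum_Ioo_eq_zero_iff]
  constructor
  · intro hD r hr0 hr1 θ
    rw [sum_tsum_angular_mul_tsum_radial_eq hreal hMnat hr0 hr1 θ]
    simp [hD]
  · intro hperp N
    rcases eq_or_ne N 0 with rfl | hN
    · exact pairingCoeff_zero c
    have him (θ : ℝ) : (∑' n : ℕ, pairingCoeff c n * (2⁻¹ : ℂ) ^ n * exp (I * n * θ)).im = 0 := by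
      have h := hperp 2⁻¹ (by norm_num) (by norm_num) θ
      rw [sum_tsum_angular_mul_tsum_radial_eq hreal hMnat (by norm_num) (by norm_num) θ] at h
      simpa [mul_pow, ← exp_nat_mul, mul_assoc, mul_left_comm] using h
    have hsumm := summable_norm_pairingCoeff_mul_pow hMnat (z := 2⁻¹) (by norm_num)
    simpa using eq_zero_of_forall_im_tsum_eq_zero hsumm him hN
end

section
/- Asymptotics of the half-Laplacian past an endpoint, model case: for α > 0 and ε > 0, define u(y) = α(b−y)^{1/2} for y ∈ (b−ε, b) and u(y) = 0 for y ≥ b. Then lim_{x→b⁺} (x−b)^{1/2} · (1/π)∫_{b−ε}^{b} u(y)/(x−y)² dy = α/2. -/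
/-!
After the shift `t = b - y` and the substitution `t = w²`, the integral becomes
`∫₀^{√ε} 2w²/(s + w²)² dw` with `s = x - b`, whose antiderivative is
`arctan (w/√s)/√s - w/(s + w²)`. Multiplied by `√s` it equals
`arctan (√ε/√s) - √s √ε/(s + ε)`, which tends to `π/2` as `s → 0⁺`.
-/

open MeasureTheory Filter Set Real Topology

lemma hasDerivAt_arctan_div_sqrt_sub_div {s : ℝ} (hs : 0 < s) (w : ℝ) :
    HasDerivAt (fun w => arctan (w / √s) / √s - w / (s + w ^ 2))
      (2 * w ^ 2 / (s + w ^ 2) ^ 2) w := by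
  have hden : s + w ^ 2 ≠ 0 := by positivity
  have harctan := ((hasDerivAt_id' w).div_const √s).arctan
  have hquot := (hasDerivAt_id' w).div ((hasDerivAt_pow 2 w).const_add s) hden
  refine ((harctan.div_const √s).sub hquot).congr_deriv ?_
  obtain ⟨r, hr, rfl⟩ : ∃ r, 0 < r ∧ s = r ^ 2 := ⟨√s, sqrt_pos.mpr hs, (sq_sqrt hs.le).symm⟩
  rw [sqrt_sq hr.le]
  field_simp
  ring

lemma integral_two_mul_sq_div_add_sq_sq {s : ℝ} (hs : 0 < s) (c : ℝ) :
    ∫ w in 0..c, 2 * w ^ 2 / (s + w ^ 2) ^ 2 = arctan (c / √s) / √s - c / (s + c ^ 2) := by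
  have hcont : Continuous fun w : ℝ => 2 * w ^ 2 / (s + w ^ 2) ^ 2 :=
    by fun_prop (disch := intro w; positivity)
  rw [intervalIntegral.integral_eq_sub_of_hasDerivAt
    (fun w _ => hasDerivAt_arctan_div_sqrt_sub_div hs w) (hcont.intervalIntegrable _ _)]
  simp

lemma integral_sqrt_div_add_sq {s ε : ℝ} (hs : 0 < s) (hε : 0 ≤ ε) :
    ∫ t in 0..ε, √t / (s + t) ^ 2 = arctan (√ε / √s) / √s - √ε / (s + ε) := by
  have hsubst := intervalIntegral.integral_comp_mul_deriv' (a := 0) (b := √ε)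
    (f := fun w => w ^ 2) (f' := fun w => 2 * w) (g := fun t => √t / (s + t) ^ 2)
    (fun w _ => by simpa using hasDerivAt_pow 2 w) (by fun_prop)
    (by
      refine ContinuousOn.div (by fun_prop) (by fun_prop) ?_
      rintro _ ⟨w, -, rfl⟩
      positivity)
  simp only [zero_pow two_ne_zero, sq_sqrt hε] at hsubst
  have hantideriv := integral_two_mul_sq_div_add_sq_sq hs √ε
  rw [sq_sqrt hε] at hantideriv
  rw [← hsubst, ← hantideriv]
  refine intervalIntegral.integral_congr fun w hw => ?_
  rw [uIcc_of_le (sqrt_nonneg ε)] at hw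
  simp only [Function.comp_apply, sqrt_sq hw.1]
  ring

lemma integral_sqrt_sub_div_sub_sq {b ε x : ℝ} (hx : b < x) (hε : 0 ≤ ε) :
    ∫ y in (b - ε)..b, √(b - y) / (x - y) ^ 2 =
      arctan (√ε / √(x - b)) / √(x - b) - √ε / (x - b + ε) := by
  have hshift := intervalIntegral.integral_comp_sub_left
    (fun t => √t / (x - b + t) ^ 2) (a := b - ε) (b := b) b
  simp only [sub_self, sub_sub_cancel, sub_add_sub_cancel] at hshift
  rw [hshift, integral_sqrt_div_add_sq (sub_pos.mpr hx) hε]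

lemma tendsto_arctan_div_sqrt_sub {ε : ℝ} (hε : 0 < ε) :
    Tendsto (fun s => arctan (√ε / √s) - √s * (√ε / (s + ε))) (𝓝[>] 0) (𝓝 (π / 2)) := by
  have hsqrt : Tendsto (fun s : ℝ => √s) (𝓝[>] 0) (𝓝[>] 0) :=
    tendsto_nhdsWithin_of_tendsto_nhds_of_eventually_within _
      (continuous_sqrt.tendsto' 0 0 sqrt_zero |>.mono_left nhdsWithin_le_nhds)
      (eventually_nhdsWithin_of_forall fun s hs => sqrt_pos.mpr hs)
  have harctan : Tendsto (fun s => arctan (√ε / √s)) (𝓝[>] 0) (𝓝 (π / 2)) := by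
    refine (tendsto_arctan_atTop.mono_right nhdsWithin_le_nhds).comp ?_
    simp only [div_eq_mul_inv]
    exact (tendsto_inv_nhdsGT_zero.comp hsqrt).const_mul_atTop (sqrt_pos.mpr hε)
  have hvanish : Tendsto (fun s => √s * (√ε / (s + ε))) (𝓝[>] 0) (𝓝 0) := by
    have hcont : ContinuousAt (fun s => √s * (√ε / (s + ε))) 0 :=
      continuous_sqrt.continuousAt.mul
        (continuousAt_const.div (continuousAt_id.add continuousAt_const) (by simpa using hε.ne'))
    simpa using hcont.tendsto.mono_left nhdsWithin_le_nhds
  simpa using harctan.sub hvanish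

theorem halfLap_endpoint_asymptotics_general (α ε b : ℝ) (hε : 0 < ε) :
    Filter.Tendsto
      (fun x : ℝ => Real.sqrt (x - b) *
        ((1 / Real.pi) * ∫ y in (b - ε)..b, α * Real.sqrt (b - y) / (x - y) ^ 2))
      (nhdsWithin b (Set.Ioi b)) (nhds (α / 2)) := by
  have hexplicit : ∀ᶠ x in 𝓝[>] b,
      (α / π) * (arctan (√ε / √(x - b)) - √(x - b) * (√ε / (x - b + ε))) =
        √(x - b) * ((1 / π) * ∫ y in (b - ε)..b, α * √(b - y) / (x - y) ^ 2) := by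
    filter_upwards [self_mem_nhdsWithin] with x hx
    have hsqrt : 0 < √(x - b) := sqrt_pos.mpr (sub_pos.mpr hx)
    simp only [mul_div_assoc, intervalIntegral.integral_const_mul,
      integral_sqrt_sub_div_sub_sq hx hε.le]
    field_simp
  have hshift : Tendsto (fun x => x - b) (𝓝[>] b) (𝓝[>] 0) := by
    have hmap := map_subRight_nhdsGT (c := b) (a := b)
    rw [sub_self] at hmap
    exact hmap.le
  refine Tendsto.congr' hexplicit ?_
  have hlimit := ((tendsto_arctan_div_sqrt_sub hε).comp hshift).const_mul (α / π)
  rwa [div_mul_div_cancel₀ pi_pos.ne'] at hlimit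

/-- Asymptotics of the half-Laplacian past an endpoint, model case: with
`u(y) = α(b−y)^{1/2}` on `(b−ε, b)`,
`lim_{x→b⁺} (x−b)^{1/2}·(1/π)∫_{b−ε}^{b} u(y)/(x−y)² dy = α/2`. -/
theorem halfLap_endpoint_asymptotics (α ε b : ℝ) (hα : 0 < α) (hε : 0 < ε) :
    Filter.Tendsto
      (fun x : ℝ => Real.sqrt (x - b) *
        ((1 / Real.pi) * ∫ y in (b - ε)..b, α * Real.sqrt (b - y) / (x - y) ^ 2))
      (nhdsWithin b (Set.Ioi b)) (nhds (α / 2)) :=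
  halfLap_endpoint_asymptotics_general α ε b hε
end
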